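/- Let s be a finite nonempty set of directions at a vertex, α ∈ (0, 2π), and define v^{(s)} := max_{j ∈ s} |{k ∈ s : (θ_k − θ_j) mod 2π ≤ α}|. Then for any angle φ, the number of directions θ ∈ s with (θ − φ) mod 2π ≤ α is at most v^{(s)}. Consequently, any subset of s that satisfies the α-angular constraint (i.e., is enclosable by an α-sector) has cardinality at most v^{(s)}. -/

import Mathlib

open Real

noncomputable def amod (x : ℝ) : ℝ := toIcoMod Real.two_pi_pos 0 x

noncomputable def ang (a b : ℝ) : ℝ := amod (b - a)

/-!
Among the directions enclosed by the α-sector starting at φ, take the one `j` closest to φ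
counterclockwise. Every other enclosed direction `k` satisfies `ang j k = ang φ k - ang φ j ≤ α`,
so the sector starting at the direction `j ∈ s` encloses at least as many directions of `s`.
-/

lemma amod_mem_Ico (x : ℝ) : amod x ∈ Set.Ico 0 (2 * π) := by
  simpa only [amod, zero_add] using toIcoMod_mem_Ico Real.two_pi_pos 0 x

lemma ang_nonneg (a b : ℝ) : 0 ≤ ang a b :=
  (amod_mem_Ico _).1

lemma ang_eq_sub_of_le {φ j k : ℝ} (h : ang φ j ≤ ang φ k) : ang j k = ang φ k - ang φ j := by
  have hj := toIcoMod_add_toIcoDiv_zsmul Real.two_pi_pos 0 (j - φ)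
  have hk := toIcoMod_add_toIcoDiv_zsmul Real.two_pi_pos 0 (k - φ)
  have hk_lt := (amod_mem_Ico (k - φ)).2
  have hj_nonneg := ang_nonneg φ j
  unfold ang amod at h hk_lt hj_nonneg ⊢
  refine (toIcoMod_eq_iff Real.two_pi_pos).2 ⟨⟨by linarith, by linarith⟩, ?_⟩
  refine ⟨toIcoDiv Real.two_pi_pos 0 (k - φ) - toIcoDiv Real.two_pi_pos 0 (j - φ), ?_⟩
  rw [sub_zsmul]
  linarith

lemma ang_le_of_le {φ j k : ℝ} (h : ang φ j ≤ ang φ k) : ang j k ≤ ang φ k := by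
  rw [ang_eq_sub_of_le h]
  linarith [ang_nonneg φ j]

lemma card_filter_ang_le_sup' (s : Finset ℝ) (hs : s.Nonempty) (α φ : ℝ) :
    (s.filter fun k => ang φ k ≤ α).card ≤
      s.sup' hs fun j => (s.filter fun k => ang j k ≤ α).card := by
  set T := s.filter fun k => ang φ k ≤ α
  obtain hT | hT := T.eq_empty_or_nonempty
  · rw [hT, Finset.card_empty]
    exact Nat.zero_le _
  obtain ⟨j, hjT, hj_min⟩ := T.exists_min_image (ang φ) hT
  have hj_mem : j ∈ s := (Finset.mem_filter.1 hjT).1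
  have hT_sub : T ⊆ s.filter fun k => ang j k ≤ α := fun k hk =>
    Finset.mem_filter.2 ⟨(Finset.mem_filter.1 hk).1,
      (ang_le_of_le (hj_min k hk)).trans (Finset.mem_filter.1 hk).2⟩
  exact (Finset.card_le_card hT_sub).trans
    (Finset.le_sup' (fun j => (s.filter fun k => ang j k ≤ α).card) hj_mem)

theorem stmt6_general (s : Finset ℝ) (hs : s.Nonempty) (α : ℝ) :
    (∀ φ : ℝ, (s.filter fun k => ang φ k ≤ α).card ≤
        s.sup' hs fun j => (s.filter fun k => ang j k ≤ α).card) ∧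
      ∀ A ⊆ s, (∃ φ : ℝ, ∀ θ ∈ A, ang φ θ ≤ α) →
        A.card ≤ s.sup' hs fun j => (s.filter fun k => ang j k ≤ α).card := by
  refine ⟨card_filter_ang_le_sup' s hs α, ?_⟩
  rintro A hA ⟨φ, hφ⟩
  have hA_sub : A ⊆ s.filter fun k => ang φ k ≤ α := fun k hk =>
    Finset.mem_filter.2 ⟨hA hk, hφ k hk⟩
  exact (Finset.card_le_card hA_sub).trans (card_filter_ang_le_sup' s hs α φ)

theorem stmt6 (s : Finset ℝ) (hs : s.Nonempty) (hsub : ∀ θ ∈ s, θ ∈ Set.Ico 0 (2 * π))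
    (α : ℝ) (hα : α ∈ Set.Ioo 0 (2 * π)) :
    (∀ φ : ℝ, (s.filter fun k => ang φ k ≤ α).card ≤
        s.sup' hs fun j => (s.filter fun k => ang j k ≤ α).card) ∧
      ∀ A ⊆ s, (∃ φ : ℝ, ∀ θ ∈ A, ang φ θ ≤ α) →
        A.card ≤ s.sup' hs fun j => (s.filter fun k => ang j k ≤ α).card :=
  stmt6_general s hs α
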